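/- arXiv:1304.2568 — 2 statements merged into one kernel-verified Lean document; each statement's English description precedes it below -/
import Mathlib

section
/- Under the change of variables x1 = p+q, x2 = p-q, e1 = x1^2 + γ1 + γ2, e2 = x2^2 + γ1 - γ2, the system ṗ = -rq, q̇ = -rp - γ3, ṙ = -2q(2p+1) - 2γ2, γ̇1 = 2(qγ3 - rγ2), γ̇2 = 2(pγ3 - rγ1), γ̇3 = 2(p^2-q^2)q - 2qγ1 + 2pγ2 transforms into ẋ1 = -r x1 - γ3, ẋ2 = r x2 + γ3, ė1 = -2 r e1, ė2 = 2 r e2. -/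
/-! In `x₁ = p + q`, `x₂ = p - q` the equations for `p, q` become `ẋ₁ = -r x₁ - γ₃` and
`ẋ₂ = r x₂ + γ₃`, while `γ₁ + γ₂` and `γ₁ - γ₂` have derivatives `2(γ₃ x₁ - r(γ₁ + γ₂))` and
`-2(γ₃ x₂ - r(γ₁ - γ₂))`. So in the derivative of `x² + g` the `γ₃`-terms coming from `x²` and
from `g` cancel, leaving `∓2r (x² + g)`; the second case is the first with `r, γ₃` replaced by
`-r, -γ₃`. -/

theorem HasDerivAt.sq_add_of_linear {x g : ℝ → ℝ} {t a b : ℝ}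
    (hx : HasDerivAt x (-a * x t - b) t) (hg : HasDerivAt g (2 * (b * x t - a * g t)) t) :
    HasDerivAt (fun s => x s ^ 2 + g s) (-2 * a * (x t ^ 2 + g t)) t :=
  ((hx.pow 2).add hg).congr_deriv (by ring)

theorem stmt_16_general (p q r γ1 γ2 γ3 : ℝ → ℝ)
    (hp : ∀ t, HasDerivAt p (-(r t) * q t) t)
    (hq : ∀ t, HasDerivAt q (-(r t) * p t - γ3 t) t)
    (hg1 : ∀ t, HasDerivAt γ1 (2 * (q t * γ3 t - r t * γ2 t)) t)
    (hg2 : ∀ t, HasDerivAt γ2 (2 * (p t * γ3 t - r t * γ1 t)) t)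
    (x1 x2 e1 e2 : ℝ → ℝ)
    (hx1 : x1 = fun t => p t + q t)
    (hx2 : x2 = fun t => p t - q t)
    (he1 : e1 = fun t => (x1 t)^2 + γ1 t + γ2 t)
    (he2 : e2 = fun t => (x2 t)^2 + γ1 t - γ2 t) :
    ∀ t, HasDerivAt x1 (-(r t) * x1 t - γ3 t) t
      ∧ HasDerivAt x2 (r t * x2 t + γ3 t) t
      ∧ HasDerivAt e1 (-2 * r t * e1 t) t
      ∧ HasDerivAt e2 (2 * r t * e2 t) t := by
  subst hx1 hx2 he1 he2
  intro t
  have hx1 : HasDerivAt (fun s => p s + q s) (-(r t) * (p t + q t) - γ3 t) t :=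
    ((hp t).add (hq t)).congr_deriv (by ring)
  have hx2 : HasDerivAt (fun s => p s - q s) (-(-r t) * (p t - q t) - -γ3 t) t :=
    ((hp t).sub (hq t)).congr_deriv (by ring)
  have hγsum : HasDerivAt (fun s => γ1 s + γ2 s)
      (2 * (γ3 t * (p t + q t) - r t * (γ1 t + γ2 t))) t :=
    ((hg1 t).add (hg2 t)).congr_deriv (by ring)
  have hγdiff : HasDerivAt (fun s => γ1 s - γ2 s)
      (2 * (-γ3 t * (p t - q t) - -r t * (γ1 t - γ2 t))) t :=
    ((hg1 t).sub (hg2 t)).congr_deriv (by ring)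
  refine ⟨hx1, hx2.congr_deriv (by ring), ?_, ?_⟩
  · simpa only [add_assoc] using hx1.sq_add_of_linear hγsum
  · simpa only [add_sub_assoc, neg_mul, mul_neg, neg_neg] using hx2.sq_add_of_linear hγdiff

/-- Under x1 = p+q, x2 = p-q, e1 = x1² + γ1 + γ2, e2 = x2² + γ1 - γ2,
the system transforms into ẋ1 = -r x1 - γ3, ẋ2 = r x2 + γ3,
ė1 = -2 r e1, ė2 = 2 r e2. -/
theorem stmt_16 (p q r γ1 γ2 γ3 : ℝ → ℝ)
    (hp : ∀ t, HasDerivAt p (-(r t) * q t) t)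
    (hq : ∀ t, HasDerivAt q (-(r t) * p t - γ3 t) t)
    (hr : ∀ t, HasDerivAt r (-2 * q t * (2 * p t + 1) - 2 * γ2 t) t)
    (hg1 : ∀ t, HasDerivAt γ1 (2 * (q t * γ3 t - r t * γ2 t)) t)
    (hg2 : ∀ t, HasDerivAt γ2 (2 * (p t * γ3 t - r t * γ1 t)) t)
    (hg3 : ∀ t, HasDerivAt γ3
      (2 * ((p t)^2 - (q t)^2) * q t - 2 * q t * γ1 t + 2 * p t * γ2 t) t)
    (x1 x2 e1 e2 : ℝ → ℝ)
    (hx1 : x1 = fun t => p t + q t)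
    (hx2 : x2 = fun t => p t - q t)
    (he1 : e1 = fun t => (x1 t)^2 + γ1 t + γ2 t)
    (he2 : e2 = fun t => (x2 t)^2 + γ1 t - γ2 t) :
    ∀ t, HasDerivAt x1 (-(r t) * x1 t - γ3 t) t
      ∧ HasDerivAt x2 (r t * x2 t + γ3 t) t
      ∧ HasDerivAt e1 (-2 * r t * e1 t) t
      ∧ HasDerivAt e2 (2 * r t * e2 t) t :=
  stmt_16_general p q r γ1 γ2 γ3 hp hq hg1 hg2 x1 x2 e1 e2 hx1 hx2 he1 he2
end

section
/- For solutions of the system ẋ1 = -r x1 - γ3, ẋ2 = r x2 + γ3, ė1 = -2re1, ė2 = 2re2, ṙ = -x1 + x2 - e1 + e2, γ̇3 = x2 e1 - x1 e2, the following are first integrals (their time derivatives vanish): I1 = r^2 - 2(x1+x2) - e1 - e2, I2 = rγ3 + x1 x2 + x2 e1 + x1 e2, I3 = γ3^2 - x2^2 e1 - x1^2 e2, and I4 = e1 e2. -/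
namespace ReducedSystem

variable {x1 x2 e1 e2 r γ3 : ℝ → ℝ} {t : ℝ}

theorem hasDerivAt_I₁ (hx1 : HasDerivAt x1 (-(r t) * x1 t - γ3 t) t)
    (hx2 : HasDerivAt x2 (r t * x2 t + γ3 t) t) (he1 : HasDerivAt e1 (-2 * r t * e1 t) t)
    (he2 : HasDerivAt e2 (2 * r t * e2 t) t)
    (hr : HasDerivAt r (-(x1 t) + x2 t - e1 t + e2 t) t) :
    HasDerivAt (fun t => (r t)^2 - 2*(x1 t + x2 t) - e1 t - e2 t) 0 t :=
  ((((hr.pow 2).sub ((hx1.add hx2).const_mul 2)).sub he1).sub he2).congr_deriv (by ring)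

theorem hasDerivAt_I₂ (hx1 : HasDerivAt x1 (-(r t) * x1 t - γ3 t) t)
    (hx2 : HasDerivAt x2 (r t * x2 t + γ3 t) t) (he1 : HasDerivAt e1 (-2 * r t * e1 t) t)
    (he2 : HasDerivAt e2 (2 * r t * e2 t) t)
    (hr : HasDerivAt r (-(x1 t) + x2 t - e1 t + e2 t) t)
    (hg3 : HasDerivAt γ3 (x2 t * e1 t - x1 t * e2 t) t) :
    HasDerivAt (fun t => r t * γ3 t + x1 t * x2 t + x2 t * e1 t + x1 t * e2 t) 0 t :=
  ((((hr.mul hg3).add (hx1.mul hx2)).add (hx2.mul he1)).add (hx1.mul he2)).congr_deriv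
    (by ring)

theorem hasDerivAt_I₃ (hx1 : HasDerivAt x1 (-(r t) * x1 t - γ3 t) t)
    (hx2 : HasDerivAt x2 (r t * x2 t + γ3 t) t) (he1 : HasDerivAt e1 (-2 * r t * e1 t) t)
    (he2 : HasDerivAt e2 (2 * r t * e2 t) t)
    (hg3 : HasDerivAt γ3 (x2 t * e1 t - x1 t * e2 t) t) :
    HasDerivAt (fun t => (γ3 t)^2 - (x2 t)^2 * e1 t - (x1 t)^2 * e2 t) 0 t :=
  (((hg3.pow 2).sub ((hx2.pow 2).mul he1)).sub ((hx1.pow 2).mul he2)).congr_deriv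
    (by simp only [Pi.pow_apply]; ring)

theorem hasDerivAt_I₄ (he1 : HasDerivAt e1 (-2 * r t * e1 t) t)
    (he2 : HasDerivAt e2 (2 * r t * e2 t) t) :
    HasDerivAt (fun t => e1 t * e2 t) 0 t :=
  (he1.mul he2).congr_deriv (by ring)

end ReducedSystem

/-- The four stated quantities are first integrals of the reduced system:
their time derivatives vanish. -/
theorem stmt_17 (x1 x2 e1 e2 r γ3 : ℝ → ℝ)
    (hx1 : ∀ t, HasDerivAt x1 (-(r t) * x1 t - γ3 t) t)
    (hx2 : ∀ t, HasDerivAt x2 (r t * x2 t + γ3 t) t)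
    (he1 : ∀ t, HasDerivAt e1 (-2 * r t * e1 t) t)
    (he2 : ∀ t, HasDerivAt e2 (2 * r t * e2 t) t)
    (hr : ∀ t, HasDerivAt r (-(x1 t) + x2 t - e1 t + e2 t) t)
    (hg3 : ∀ t, HasDerivAt γ3 (x2 t * e1 t - x1 t * e2 t) t) :
    ∀ t, HasDerivAt (fun t => (r t)^2 - 2*(x1 t + x2 t) - e1 t - e2 t) 0 t
      ∧ HasDerivAt (fun t => r t * γ3 t + x1 t * x2 t
          + x2 t * e1 t + x1 t * e2 t) 0 t
      ∧ HasDerivAt (fun t => (γ3 t)^2 - (x2 t)^2 * e1 t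
          - (x1 t)^2 * e2 t) 0 t
      ∧ HasDerivAt (fun t => e1 t * e2 t) 0 t := fun t =>
  ⟨ReducedSystem.hasDerivAt_I₁ (hx1 t) (hx2 t) (he1 t) (he2 t) (hr t),
    ReducedSystem.hasDerivAt_I₂ (hx1 t) (hx2 t) (he1 t) (he2 t) (hr t) (hg3 t),
    ReducedSystem.hasDerivAt_I₃ (hx1 t) (hx2 t) (he1 t) (he2 t) (hg3 t),
    ReducedSystem.hasDerivAt_I₄ (he1 t) (he2 t)⟩
end
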